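/- arXiv:1508.06779 — 2 statements merged into one kernel-verified Lean document; each statement's English description precedes it below -/
import Mathlib

section
/- (Theorem 5, algebra case) Let P : E → B be a fibration with fibrewise binary coproducts and dependent coproducts (left adjoints ∐_{u_k} ⊣ u_k*). For a signature (F, u) with F = ⟨F₁, F₂⟩ : P_I → P_{J₁} × P_{J₂} and u = (u₁ : J₁ → I, u₂ : J₂ → I), there is an isomorphism of categories Dialg(F, ⟨u₁*, u₂*⟩) ≅ Alg(∐_{u₁} ∘ F₁ +_I ∐_{u₂} ∘ F₂), sending a dialgebra (c₁ : F₁ X → u₁* X, c₂ : F₂ X → u₂* X) to the algebra obtained by transposing each component across ∐_{u_k} ⊣ u_k* and cotupling across the fibrewise coproduct. -/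
open CategoryTheory Limits

universe v₁ v₂ v₃ u₁ u₂ u₃

variable {C : Type u₁} [Category.{v₁} C]
  {D₁ : Type u₂} [Category.{v₂} D₁] {D₂ : Type u₃} [Category.{v₃} D₂]

/-- A dialgebra for a signature `(⟨F₁,F₂⟩, (u₁,u₂))`: an object `X` of the fibre `P_I`
with maps `c₁ : F₁ X ⟶ u₁* X` and `c₂ : F₂ X ⟶ u₂* X` (where `rₖ = uₖ*`). -/
structure PairDialgebra (F₁ r₁ : C ⥤ D₁) (F₂ r₂ : C ⥤ D₂) where
  A : C
  c₁ : F₁.obj A ⟶ r₁.obj A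
  c₂ : F₂.obj A ⟶ r₂.obj A

namespace PairDialgebra

variable {F₁ r₁ : C ⥤ D₁} {F₂ r₂ : C ⥤ D₂}

/-- The category `Dialg(⟨F₁,F₂⟩, ⟨u₁*,u₂*⟩)`. -/
instance : Category (PairDialgebra F₁ r₁ F₂ r₂) where
  Hom X Y := {h : X.A ⟶ Y.A //
    X.c₁ ≫ r₁.map h = F₁.map h ≫ Y.c₁ ∧ X.c₂ ≫ r₂.map h = F₂.map h ≫ Y.c₂}
  id X := ⟨𝟙 X.A, by simp⟩
  comp {X Y Z} f g := ⟨f.1 ≫ g.1, by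
    obtain ⟨hf₁, hf₂⟩ := f.2; obtain ⟨hg₁, hg₂⟩ := g.2
    constructor <;> simp only [Functor.map_comp, Category.assoc]
    · rw [reassoc_of% hf₁, hg₁]
    · rw [reassoc_of% hf₂, hg₂]⟩
  id_comp f := Subtype.ext (Category.id_comp _)
  comp_id f := Subtype.ext (Category.comp_id _)
  assoc f g h := Subtype.ext (Category.assoc _ _ _)

end PairDialgebra

/-- The endofunctor `∐_{u₁} ∘ F₁ +_I ∐_{u₂} ∘ F₂` on the fibre `P_I`, where
`sₖ = ∐_{uₖ}` is the dependent coproduct and `+_I` the fibrewise coproduct. -/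
noncomputable def sigmaPlus (F₁ : C ⥤ D₁) (F₂ : C ⥤ D₂) (s₁ : D₁ ⥤ C) (s₂ : D₂ ⥤ C)
    [HasBinaryCoproducts C] : C ⥤ C where
  obj X := s₁.obj (F₁.obj X) ⨿ s₂.obj (F₂.obj X)
  map f := coprod.map (s₁.map (F₁.map f)) (s₂.map (F₂.map f))

/-!
Transposing across `sₖ ⊣ rₖ` and cotupling across `⨿` is a bijection between pairs
`(c₁, c₂)` and structure maps `s₁ F₁ X ⨿ s₂ F₂ X ⟶ X`, natural in both variables. Naturality
turns the two dialgebra squares of a map `h` into the algebra square of `h` and back, so the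
bijection extends to mutually inverse functors that are the identity on carriers and maps.
Being an isomorphism of categories, it preserves and reflects initial objects.
-/

lemma CategoryTheory.Functor.ext_of_comp_faithful {A B E : Type*} [Category A] [Category B]
    [Category E] {F G : A ⥤ B} (U : B ⥤ E) [U.Faithful] (hobj : ∀ X, F.obj X = G.obj X)
    (hU : F ⋙ U = G ⋙ U) : F = G :=
  Functor.ext hobj fun X Y f => U.map_injective <| by
    simpa [eqToHom_map] using Functor.congr_hom hU f

lemma CategoryTheory.Limits.nonempty_isInitial_iff_of_comp_eq_id {A B : Type*} [Category A]
    [Category B] (Φ : A ⥤ B) (Ψ : B ⥤ A) (hΦΨ : Φ ⋙ Ψ = 𝟭 A) (hΨΦ : Ψ ⋙ Φ = 𝟭 B) (X : A) :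
    Nonempty (IsInitial X) ↔ Nonempty (IsInitial (Φ.obj X)) :=
  have : Φ.IsEquivalence :=
    (Equivalence.mk Φ Ψ (eqToIso hΦΨ.symm) (eqToIso hΨΦ)).isEquivalence_functor
  (IsInitial.isInitialIffObj Φ X).nonempty_congr

namespace PairDialgebra

variable {F₁ r₁ : C ⥤ D₁} {F₂ r₂ : C ⥤ D₂}

lemma hom_ext {X Y : PairDialgebra F₁ r₁ F₂ r₂} {f g : X ⟶ Y} (h : f.1 = g.1) : f = g :=
  Subtype.ext h

def forget : PairDialgebra F₁ r₁ F₂ r₂ ⥤ C where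
  obj X := X.A
  map f := f.1

instance : (forget : PairDialgebra F₁ r₁ F₂ r₂ ⥤ C).Faithful where
  map_injective := hom_ext

end PairDialgebra

section Transpose

variable [HasBinaryCoproducts C] {r₁ : C ⥤ D₁} {r₂ : C ⥤ D₂} {s₁ : D₁ ⥤ C} {s₂ : D₂ ⥤ C}
  (adj₁ : s₁ ⊣ r₁) (adj₂ : s₂ ⊣ r₂)

noncomputable def coprodTransposeEquiv (X₁ : D₁) (X₂ : D₂) (A : C) :
    (s₁.obj X₁ ⨿ s₂.obj X₂ ⟶ A) ≃ (X₁ ⟶ r₁.obj A) × (X₂ ⟶ r₂.obj A) where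
  toFun f := (adj₁.homEquiv _ _ (coprod.inl ≫ f), adj₂.homEquiv _ _ (coprod.inr ≫ f))
  invFun c := coprod.desc ((adj₁.homEquiv _ _).symm c.1) ((adj₂.homEquiv _ _).symm c.2)
  left_inv f := by
    ext <;> simp only [Equiv.symm_apply_apply, coprod.inl_desc, coprod.inr_desc]
  right_inv c := by simp only [coprod.inl_desc, coprod.inr_desc, Equiv.apply_symm_apply]

variable {adj₁ adj₂}

lemma coprodTransposeEquiv_comp {X₁ : D₁} {X₂ : D₂} {A B : C} (f : s₁.obj X₁ ⨿ s₂.obj X₂ ⟶ A)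
    (h : A ⟶ B) :
    coprodTransposeEquiv adj₁ adj₂ X₁ X₂ B (f ≫ h) =
      ((coprodTransposeEquiv adj₁ adj₂ X₁ X₂ A f).1 ≫ r₁.map h,
        (coprodTransposeEquiv adj₁ adj₂ X₁ X₂ A f).2 ≫ r₂.map h) := by
  simp [coprodTransposeEquiv, Adjunction.homEquiv_naturality_right]

lemma coprodTransposeEquiv_coprod_map_comp {X₁ Y₁ : D₁} {X₂ Y₂ : D₂} {A : C} (g₁ : X₁ ⟶ Y₁)
    (g₂ : X₂ ⟶ Y₂) (f : s₁.obj Y₁ ⨿ s₂.obj Y₂ ⟶ A) :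
    coprodTransposeEquiv adj₁ adj₂ X₁ X₂ A (coprod.map (s₁.map g₁) (s₂.map g₂) ≫ f) =
      (g₁ ≫ (coprodTransposeEquiv adj₁ adj₂ Y₁ Y₂ A f).1,
        g₂ ≫ (coprodTransposeEquiv adj₁ adj₂ Y₁ Y₂ A f).2) := by
  simp [coprodTransposeEquiv, Adjunction.homEquiv_naturality_left]

lemma coprod_map_comp_eq_comp_iff {X₁ Y₁ : D₁} {X₂ Y₂ : D₂} {A B : C} (g₁ : X₁ ⟶ Y₁)
    (g₂ : X₂ ⟶ Y₂) (h : A ⟶ B) (a : s₁.obj X₁ ⨿ s₂.obj X₂ ⟶ A) (b : s₁.obj Y₁ ⨿ s₂.obj Y₂ ⟶ B) :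
    coprod.map (s₁.map g₁) (s₂.map g₂) ≫ b = a ≫ h ↔
      (coprodTransposeEquiv adj₁ adj₂ X₁ X₂ A a).1 ≫ r₁.map h =
          g₁ ≫ (coprodTransposeEquiv adj₁ adj₂ Y₁ Y₂ B b).1 ∧
        (coprodTransposeEquiv adj₁ adj₂ X₁ X₂ A a).2 ≫ r₂.map h =
          g₂ ≫ (coprodTransposeEquiv adj₁ adj₂ Y₁ Y₂ B b).2 := by
  rw [← (coprodTransposeEquiv adj₁ adj₂ X₁ X₂ B).injective.eq_iff,
    coprodTransposeEquiv_coprod_map_comp, coprodTransposeEquiv_comp]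
  simp only [Prod.mk.injEq, eq_comm]

end Transpose

namespace PairDialgebra

variable [HasBinaryCoproducts C] (F₁ : C ⥤ D₁) (F₂ : C ⥤ D₂) {r₁ : C ⥤ D₁} {r₂ : C ⥤ D₂}
  {s₁ : D₁ ⥤ C} {s₂ : D₂ ⥤ C} (adj₁ : s₁ ⊣ r₁) (adj₂ : s₂ ⊣ r₂)

noncomputable def toAlgebra :
    PairDialgebra F₁ r₁ F₂ r₂ ⥤ Endofunctor.Algebra (sigmaPlus F₁ F₂ s₁ s₂) where
  obj X := ⟨X.A, (coprodTransposeEquiv adj₁ adj₂ _ _ X.A).symm (X.c₁, X.c₂)⟩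
  map f := ⟨f.1, (coprod_map_comp_eq_comp_iff (adj₁ := adj₁) (adj₂ := adj₂)
    (F₁.map f.1) (F₂.map f.1) f.1 _ _).2 <| by simpa only [Equiv.apply_symm_apply] using f.2⟩

noncomputable def ofAlgebra :
    Endofunctor.Algebra (sigmaPlus F₁ F₂ s₁ s₂) ⥤ PairDialgebra F₁ r₁ F₂ r₂ where
  obj Y := ⟨Y.a, (coprodTransposeEquiv adj₁ adj₂ _ _ Y.a Y.str).1,
    (coprodTransposeEquiv adj₁ adj₂ _ _ Y.a Y.str).2⟩
  map f := ⟨f.f, (coprod_map_comp_eq_comp_iff (adj₁ := adj₁) (adj₂ := adj₂)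
    (F₁.map f.f) (F₂.map f.f) f.f _ _).1 f.h⟩

lemma toAlgebra_comp_ofAlgebra : toAlgebra F₁ F₂ adj₁ adj₂ ⋙ ofAlgebra F₁ F₂ adj₁ adj₂ = 𝟭 _ :=
  Functor.ext_of_comp_faithful forget
    (fun X => congrArg (fun c => PairDialgebra.mk X.A c.1 c.2)
      ((coprodTransposeEquiv adj₁ adj₂ _ _ X.A).apply_symm_apply (X.c₁, X.c₂)))
    rfl

lemma ofAlgebra_comp_toAlgebra : ofAlgebra F₁ F₂ adj₁ adj₂ ⋙ toAlgebra F₁ F₂ adj₁ adj₂ = 𝟭 _ :=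
  Functor.ext_of_comp_faithful (Endofunctor.Algebra.forget _)
    (fun Y => congrArg (Endofunctor.Algebra.mk Y.a)
      ((coprodTransposeEquiv adj₁ adj₂ _ _ Y.a).symm_apply_apply Y.str))
    rfl

end PairDialgebra

/-- (Theorem 5, algebra case.) In a fibration with fibrewise binary coproducts and
dependent coproducts `∐_{uₖ} ⊣ uₖ*`, for a signature `(⟨F₁,F₂⟩, (u₁,u₂))` there is an
isomorphism of categories `Dialg(⟨F₁,F₂⟩, ⟨u₁*,u₂*⟩) ≅ Alg(∐_{u₁}∘F₁ +_I ∐_{u₂}∘F₂)`,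
sending a dialgebra `(c₁, c₂)` to the algebra obtained by transposing each component
across `∐_{uₖ} ⊣ uₖ*` and cotupling across the fibrewise coproduct. In particular the
existence of initial dialgebras and initial algebras coincide. -/
theorem pairDialg_iso_algebras [HasBinaryCoproducts C]
    (F₁ r₁ : C ⥤ D₁) (F₂ r₂ : C ⥤ D₂) (s₁ : D₁ ⥤ C) (s₂ : D₂ ⥤ C)
    (adj₁ : s₁ ⊣ r₁) (adj₂ : s₂ ⊣ r₂) :
    ∃ (Φ : PairDialgebra F₁ r₁ F₂ r₂ ⥤ Endofunctor.Algebra (sigmaPlus F₁ F₂ s₁ s₂))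
      (Ψ : Endofunctor.Algebra (sigmaPlus F₁ F₂ s₁ s₂) ⥤ PairDialgebra F₁ r₁ F₂ r₂),
      Φ ⋙ Ψ = 𝟭 _ ∧ Ψ ⋙ Φ = 𝟭 _ ∧
      (∀ X : PairDialgebra F₁ r₁ F₂ r₂,
        Φ.obj X = ⟨X.A, coprod.desc ((adj₁.homEquiv _ _).symm X.c₁)
          ((adj₂.homEquiv _ _).symm X.c₂)⟩) ∧
      (∀ X : PairDialgebra F₁ r₁ F₂ r₂,
        Nonempty (IsInitial X) ↔ Nonempty (IsInitial (Φ.obj X))) :=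
  have hΦΨ := PairDialgebra.toAlgebra_comp_ofAlgebra F₁ F₂ adj₁ adj₂
  have hΨΦ := PairDialgebra.ofAlgebra_comp_toAlgebra F₁ F₂ adj₁ adj₂
  ⟨_, _, hΦΨ, hΨΦ, fun _ => rfl, nonempty_isInitial_iff_of_comp_eq_id _ _ hΦΨ hΨΦ⟩
end

section
/- (Theorem 5, coalgebra case) Dually, if P has fibrewise binary products and dependent products (right adjoints ∏_{u_k}), then Dialg(⟨u₁*, u₂*⟩, F) ≅ Coalg(∏_{u₁} ∘ F₁ ×_I ∏_{u₂} ∘ F₂), and in particular the final dialgebra exists iff the final coalgebra exists, and they correspond under the isomorphism. -/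
open CategoryTheory Limits

universe v₁ v₂ v₃ u₁ u₂ u₃

variable {C : Type u₁} [Category.{v₁} C]
  {D₁ : Type u₂} [Category.{v₂} D₁] {D₂ : Type u₃} [Category.{v₃} D₂]

/-- A dialgebra for `(⟨u₁*,u₂*⟩, ⟨F₁,F₂⟩)`: an object `X` of the fibre `P_I` with maps
`c₁ : u₁* X ⟶ F₁ X` and `c₂ : u₂* X ⟶ F₂ X` (where `rₖ = uₖ*`). -/
structure CoPairDialgebra (r₁ F₁ : C ⥤ D₁) (r₂ F₂ : C ⥤ D₂) where
  A : C
  c₁ : r₁.obj A ⟶ F₁.obj A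
  c₂ : r₂.obj A ⟶ F₂.obj A

namespace CoPairDialgebra

variable {r₁ F₁ : C ⥤ D₁} {r₂ F₂ : C ⥤ D₂}

/-- The category `Dialg(⟨u₁*,u₂*⟩, ⟨F₁,F₂⟩)`. -/
instance : Category (CoPairDialgebra r₁ F₁ r₂ F₂) where
  Hom X Y := {h : X.A ⟶ Y.A //
    X.c₁ ≫ F₁.map h = r₁.map h ≫ Y.c₁ ∧ X.c₂ ≫ F₂.map h = r₂.map h ≫ Y.c₂}
  id X := ⟨𝟙 X.A, by simp⟩
  comp {X Y Z} f g := ⟨f.1 ≫ g.1, by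
    obtain ⟨hf₁, hf₂⟩ := f.2; obtain ⟨hg₁, hg₂⟩ := g.2
    constructor <;> simp only [Functor.map_comp, Category.assoc]
    · rw [reassoc_of% hf₁, hg₁]
    · rw [reassoc_of% hf₂, hg₂]⟩
  id_comp f := Subtype.ext (Category.id_comp _)
  comp_id f := Subtype.ext (Category.comp_id _)
  assoc f g h := Subtype.ext (Category.assoc _ _ _)

end CoPairDialgebra

/-- The endofunctor `∏_{u₁} ∘ F₁ ×_I ∏_{u₂} ∘ F₂` on the fibre `P_I`, where
`pₖ = ∏_{uₖ}` is the dependent product and `×_I` the fibrewise product. -/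
noncomputable def piTimes (F₁ : C ⥤ D₁) (F₂ : C ⥤ D₂) (p₁ : D₁ ⥤ C) (p₂ : D₂ ⥤ C)
    [HasBinaryProducts C] : C ⥤ C where
  obj X := p₁.obj (F₁.obj X) ⨯ p₂.obj (F₂.obj X)
  map f := prod.map (p₁.map (F₁.map f)) (p₂.map (F₂.map f))

/-!
Transposing across `uₖ* ⊣ ∏_{uₖ}` and tupling into the fibrewise product turns a pair of maps
`uₖ* X ⟶ Fₖ Y` into a single map `X ⟶ ∏_{u₁} F₁ Y ×_I ∏_{u₂} F₂ Y`, bijectively and naturally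
in `X` and `Y`. Naturality in both variables makes the two commuting squares of a dialgebra
morphism equivalent to the single square of a coalgebra morphism, so the bijection on structure
maps extends, with the identity on carriers and morphisms, to an isomorphism of categories; such
an isomorphism preserves and reflects terminal objects.
-/

namespace CoPairDialgebra

variable {r₁ F₁ : C ⥤ D₁} {r₂ F₂ : C ⥤ D₂}

@[ext]
lemma hom_ext {X Y : CoPairDialgebra r₁ F₁ r₂ F₂} {f g : X ⟶ Y} (h : f.1 = g.1) : f = g :=
  Subtype.ext h

lemma comp_val {X Y Z : CoPairDialgebra r₁ F₁ r₂ F₂} (f : X ⟶ Y) (g : Y ⟶ Z) :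
    (f ≫ g).1 = f.1 ≫ g.1 := rfl

lemma eqToHom_val {X Y : CoPairDialgebra r₁ F₁ r₂ F₂} (h : X = Y) :
    (eqToHom h).1 = eqToHom (congrArg CoPairDialgebra.A h) := by
  cases h; rfl

end CoPairDialgebra

lemma CategoryTheory.Endofunctor.Coalgebra.eqToHom_f {T : C ⥤ C} {X Y : Coalgebra T}
    (h : X = Y) : (eqToHom h).f = eqToHom (congrArg Coalgebra.V h) := by
  cases h; rfl

lemma CategoryTheory.Functor.nonempty_isTerminal_obj_iff {E : Type*} [Category E] (Φ : C ⥤ E)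
    [Φ.IsEquivalence] (X : C) : Nonempty (IsTerminal (Φ.obj X)) ↔ Nonempty (IsTerminal X) :=
  ⟨fun ⟨h⟩ => ⟨h.isTerminalOfObj Φ X⟩, fun ⟨h⟩ => ⟨h.isTerminalObj Φ X⟩⟩

section Transpose

variable [HasBinaryProducts C] {r₁ : C ⥤ D₁} {r₂ : C ⥤ D₂} {p₁ : D₁ ⥤ C} {p₂ : D₂ ⥤ C}
  (F₁ : C ⥤ D₁) (F₂ : C ⥤ D₂) (adj₁ : r₁ ⊣ p₁) (adj₂ : r₂ ⊣ p₂)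

noncomputable def transposePairEquiv (X : C) (Y₁ : D₁) (Y₂ : D₂) :
    (r₁.obj X ⟶ Y₁) × (r₂.obj X ⟶ Y₂) ≃ (X ⟶ p₁.obj Y₁ ⨯ p₂.obj Y₂) where
  toFun c := prod.lift (adj₁.homEquiv _ _ c.1) (adj₂.homEquiv _ _ c.2)
  invFun g := ((adj₁.homEquiv _ _).symm (g ≫ prod.fst), (adj₂.homEquiv _ _).symm (g ≫ prod.snd))
  left_inv c := by simp [prod.lift_fst, prod.lift_snd]
  right_inv g := by ext <;> simp [prod.lift_fst, prod.lift_snd]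

lemma transposePairEquiv_naturality_left {X X' : C} {Y₁ : D₁} {Y₂ : D₂} (h : X' ⟶ X)
    (c : (r₁.obj X ⟶ Y₁) × (r₂.obj X ⟶ Y₂)) :
    transposePairEquiv adj₁ adj₂ X' Y₁ Y₂ (r₁.map h ≫ c.1, r₂.map h ≫ c.2) =
      h ≫ transposePairEquiv adj₁ adj₂ X Y₁ Y₂ c := by
  ext <;> simp [transposePairEquiv, prod.lift_fst, prod.lift_snd,
    adj₁.homEquiv_naturality_left, adj₂.homEquiv_naturality_left]

lemma transposePairEquiv_naturality_right {X : C} {Y₁ Y₁' : D₁} {Y₂ Y₂' : D₂}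
    (c : (r₁.obj X ⟶ Y₁) × (r₂.obj X ⟶ Y₂)) (g₁ : Y₁ ⟶ Y₁') (g₂ : Y₂ ⟶ Y₂') :
    transposePairEquiv adj₁ adj₂ X Y₁' Y₂' (c.1 ≫ g₁, c.2 ≫ g₂) =
      transposePairEquiv adj₁ adj₂ X Y₁ Y₂ c ≫ prod.map (p₁.map g₁) (p₂.map g₂) := by
  ext <;> simp [transposePairEquiv, prod.lift_fst, prod.lift_snd,
    adj₁.homEquiv_naturality_right, adj₂.homEquiv_naturality_right]

/-- `transposePairEquiv` with its codomain written as `X ⟶ (piTimes F₁ F₂ p₁ p₂).obj Y`, so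
that it can be applied to and rewritten against coalgebra structure maps. -/
noncomputable def piTimesHomEquiv (X Y : C) :
    (r₁.obj X ⟶ F₁.obj Y) × (r₂.obj X ⟶ F₂.obj Y) ≃ (X ⟶ (piTimes F₁ F₂ p₁ p₂).obj Y) :=
  transposePairEquiv adj₁ adj₂ X (F₁.obj Y) (F₂.obj Y)

variable {F₁ F₂} in
lemma piTimesHomEquiv_comp_map_eq_iff {X Y : C} (h : X ⟶ Y)
    (c : (r₁.obj X ⟶ F₁.obj X) × (r₂.obj X ⟶ F₂.obj X))
    (d : (r₁.obj Y ⟶ F₁.obj Y) × (r₂.obj Y ⟶ F₂.obj Y)) :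
    piTimesHomEquiv F₁ F₂ adj₁ adj₂ X X c ≫ (piTimes F₁ F₂ p₁ p₂).map h =
        h ≫ piTimesHomEquiv F₁ F₂ adj₁ adj₂ Y Y d ↔
      c.1 ≫ F₁.map h = r₁.map h ≫ d.1 ∧ c.2 ≫ F₂.map h = r₂.map h ≫ d.2 := by
  change transposePairEquiv adj₁ adj₂ _ _ _ c ≫ prod.map (p₁.map (F₁.map h)) (p₂.map (F₂.map h)) =
    h ≫ transposePairEquiv adj₁ adj₂ _ _ _ d ↔ _
  rw [← transposePairEquiv_naturality_right, ← transposePairEquiv_naturality_left,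
    Equiv.apply_eq_iff_eq, Prod.ext_iff]

namespace CoPairDialgebra

noncomputable def toCoalgebra :
    CoPairDialgebra r₁ F₁ r₂ F₂ ⥤ Endofunctor.Coalgebra (piTimes F₁ F₂ p₁ p₂) where
  obj X := ⟨X.A, piTimesHomEquiv F₁ F₂ adj₁ adj₂ _ _ (X.c₁, X.c₂)⟩
  map f := ⟨f.1, (piTimesHomEquiv_comp_map_eq_iff adj₁ adj₂ _ _ _).2 f.2⟩

noncomputable def ofCoalgebra :
    Endofunctor.Coalgebra (piTimes F₁ F₂ p₁ p₂) ⥤ CoPairDialgebra r₁ F₁ r₂ F₂ where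
  obj V := ⟨V.V, ((piTimesHomEquiv F₁ F₂ adj₁ adj₂ _ _).symm V.str).1,
    ((piTimesHomEquiv F₁ F₂ adj₁ adj₂ _ _).symm V.str).2⟩
  map {V W} f := ⟨f.f, (piTimesHomEquiv_comp_map_eq_iff adj₁ adj₂ f.f _ _).1 (by
    simpa only [Equiv.apply_symm_apply] using f.h)⟩

lemma toCoalgebra_comp_ofCoalgebra :
    toCoalgebra F₁ F₂ adj₁ adj₂ ⋙ ofCoalgebra F₁ F₂ adj₁ adj₂ = 𝟭 _ :=
  CategoryTheory.Functor.ext (fun X => by simp [toCoalgebra, ofCoalgebra]) fun X Y f => by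
    ext
    rw [comp_val, comp_val, eqToHom_val, eqToHom_val]
    -- both `eqToHom`s go between carriers definitionally equal to `X.A`, hence are identities
    exact (by simp : f.1 = 𝟙 _ ≫ f.1 ≫ 𝟙 _)

lemma ofCoalgebra_comp_toCoalgebra :
    ofCoalgebra F₁ F₂ adj₁ adj₂ ⋙ toCoalgebra F₁ F₂ adj₁ adj₂ = 𝟭 _ :=
  CategoryTheory.Functor.ext (fun V => by simp [toCoalgebra, ofCoalgebra]) fun V W f => by
    ext
    rw [Endofunctor.Coalgebra.comp_f, Endofunctor.Coalgebra.comp_f,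
      Endofunctor.Coalgebra.eqToHom_f, Endofunctor.Coalgebra.eqToHom_f]
    exact (by simp : f.f = 𝟙 _ ≫ f.f ≫ 𝟙 _)

noncomputable def coalgebraEquivalence :
    CoPairDialgebra r₁ F₁ r₂ F₂ ≌ Endofunctor.Coalgebra (piTimes F₁ F₂ p₁ p₂) :=
  CategoryTheory.Equivalence.mk (toCoalgebra F₁ F₂ adj₁ adj₂) (ofCoalgebra F₁ F₂ adj₁ adj₂)
    (eqToIso (toCoalgebra_comp_ofCoalgebra F₁ F₂ adj₁ adj₂).symm)
    (eqToIso (ofCoalgebra_comp_toCoalgebra F₁ F₂ adj₁ adj₂))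

instance : (toCoalgebra F₁ F₂ adj₁ adj₂).IsEquivalence :=
  (coalgebraEquivalence F₁ F₂ adj₁ adj₂).isEquivalence_functor

end CoPairDialgebra

end Transpose

/-- (Theorem 5, coalgebra case.) In a fibration with fibrewise binary products and
dependent products `uₖ* ⊣ ∏_{uₖ}`, for a signature `(⟨F₁,F₂⟩, (u₁,u₂))` there is an
isomorphism of categories
`Dialg(⟨u₁*,u₂*⟩, ⟨F₁,F₂⟩) ≅ Coalg(∏_{u₁}∘F₁ ×_I ∏_{u₂}∘F₂)`, sending a dialgebra
`(c₁, c₂)` to the coalgebra obtained by transposing each component across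
`uₖ* ⊣ ∏_{uₖ}` and tupling across the fibrewise product; in particular a final
dialgebra exists iff a final coalgebra exists, and they correspond under the
isomorphism. -/
theorem coPairDialg_iso_coalgebras [HasBinaryProducts C]
    (r₁ F₁ : C ⥤ D₁) (r₂ F₂ : C ⥤ D₂) (p₁ : D₁ ⥤ C) (p₂ : D₂ ⥤ C)
    (adj₁ : r₁ ⊣ p₁) (adj₂ : r₂ ⊣ p₂) :
    ∃ (Φ : CoPairDialgebra r₁ F₁ r₂ F₂ ⥤ Endofunctor.Coalgebra (piTimes F₁ F₂ p₁ p₂))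
      (Ψ : Endofunctor.Coalgebra (piTimes F₁ F₂ p₁ p₂) ⥤ CoPairDialgebra r₁ F₁ r₂ F₂),
      Φ ⋙ Ψ = 𝟭 _ ∧ Ψ ⋙ Φ = 𝟭 _ ∧
      (∀ X : CoPairDialgebra r₁ F₁ r₂ F₂,
        Φ.obj X = ⟨X.A, prod.lift (adj₁.homEquiv _ _ X.c₁) (adj₂.homEquiv _ _ X.c₂)⟩) ∧
      (∀ X : CoPairDialgebra r₁ F₁ r₂ F₂,
        Nonempty (IsTerminal X) ↔ Nonempty (IsTerminal (Φ.obj X))) :=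
  ⟨CoPairDialgebra.toCoalgebra F₁ F₂ adj₁ adj₂, CoPairDialgebra.ofCoalgebra F₁ F₂ adj₁ adj₂,
    CoPairDialgebra.toCoalgebra_comp_ofCoalgebra F₁ F₂ adj₁ adj₂,
    CoPairDialgebra.ofCoalgebra_comp_toCoalgebra F₁ F₂ adj₁ adj₂, fun _ => rfl,
    fun X => (Functor.nonempty_isTerminal_obj_iff _ X).symm⟩
end
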